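/- Let F be a field of characteristic zero and n ≥ 4. For every 0 ≤ k ≤ n−3, the polynomial ξ_k ∈ F[x_1, …, x_{n−1}] is an invariant of the coadjoint representation of n_{n,1}: it satisfies the partial differential equation Σ_{j=2}^{n−1} x_{j−1} · ∂ξ_k/∂x_j = 0 (and, being independent of x_n, it is annihilated by all the coadjoint vector fields Ê_1, …, Ê_n of n_{n,1}). -/
import Mathlib


open MvPolynomial in
/-- The polynomial invariants `ξ_k` of the coadjoint representation of `n_{n,1}`,
as polynomials in the variables `x 1, x 2, …` :  `ξ_0 = x 1` and, for `k ≥ 1`,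
`ξ_k = ((-1)^k k/(k+1)!) x_2^{k+1} + Σ_{j=0}^{k-1} ((-1)^j/j!) x_2^j x_{k+2-j} x_1^{k-j}`. -/
noncomputable def xi (F : Type*) [Field F] : ℕ → MvPolynomial ℕ F
  | 0 => X 1
  | k + 1 =>
      C ((-1 : F) ^ (k + 1) * ((k + 1 : ℕ) : F) / (((k + 2).factorial : ℕ) : F)) *
          X 2 ^ (k + 2) +
        ∑ j ∈ Finset.range (k + 1),
          C ((-1 : F) ^ j / ((j.factorial : ℕ) : F)) * X 2 ^ j *
            X (k + 3 - j) * X 1 ^ (k + 1 - j)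

open MvPolynomial Finset

/-- Partial derivative of a generic monomial `C a * X 2 ^ j * X r * X 1 ^ s`. -/
private lemma pd_mono (F : Type*) [Field F] (i j r s : ℕ) (a : F)
    (hr2 : r ≠ 2) (hr1 : r ≠ 1) (hi1 : i ≠ 1) :
    pderiv i (C a * X 2 ^ j * X r * X 1 ^ s : MvPolynomial ℕ F) =
      (if i = 2 then C a * ((j : MvPolynomial ℕ F) * X 2 ^ (j - 1)) * X r * X 1 ^ s else 0) +
      (if i = r then C a * X 2 ^ j * X 1 ^ s else 0) := by
  rcases eq_or_ne i 2 with h2 | h2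
  · subst h2
    rw [if_pos rfl, if_neg (fun h => hr2 h.symm)]
    simp [pderiv_mul, pderiv_pow, pderiv_C, pderiv_X_self, pderiv_X_of_ne hr2,
      pderiv_X_of_ne (show (1 : ℕ) ≠ 2 by norm_num)]
    ring
  · rcases eq_or_ne i r with hr | hr
    · subst hr
      rw [if_neg h2, if_pos rfl]
      simp [pderiv_mul, pderiv_pow, pderiv_C, pderiv_X_self,
        pderiv_X_of_ne (Ne.symm h2), pderiv_X_of_ne (Ne.symm hi1)]
      ring
    · rw [if_neg h2, if_neg hr]
      simp [pderiv_mul, pderiv_pow, pderiv_C,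
        pderiv_X_of_ne (Ne.symm h2), pderiv_X_of_ne (Ne.symm hi1),
        pderiv_X_of_ne (Ne.symm hr)]

private lemma pderiv_xi_succ (F : Type*) [Field F] (m i : ℕ) (hi1 : i ≠ 1) :
    pderiv i (xi F (m + 1)) =
      (if i = 2 then
        C ((-1 : F) ^ (m + 1) * ((m + 1 : ℕ) : F) / (((m + 2).factorial : ℕ) : F)) *
          (((m + 2 : ℕ) : MvPolynomial ℕ F) * X 2 ^ (m + 1)) else 0)
      + ∑ j ∈ Finset.range (m + 1),
          ((if i = 2 then
              C ((-1 : F) ^ j / ((j.factorial : ℕ) : F)) *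
                ((j : MvPolynomial ℕ F) * X 2 ^ (j - 1)) * X (m + 3 - j) * X 1 ^ (m + 1 - j)
            else 0)
           + (if i = m + 3 - j then
              C ((-1 : F) ^ j / ((j.factorial : ℕ) : F)) * X 2 ^ j * X 1 ^ (m + 1 - j)
            else 0)) := by
  show pderiv i (C _ * X 2 ^ (m + 2) + ∑ j ∈ Finset.range (m + 1), _) = _
  rw [map_add, map_sum]
  congr 1
  · rw [pderiv_C_mul, pderiv_pow]
    rcases eq_or_ne i 2 with h2 | h2
    · subst h2
      rw [if_pos rfl, pderiv_X_self]
      push_cast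
      ring_nf
    · rw [if_neg h2, pderiv_X_of_ne (Ne.symm h2)]
      ring
  · refine Finset.sum_congr rfl fun j hj => ?_
    have hj' : j ≤ m := by simpa [Nat.lt_succ_iff] using hj
    exact pd_mono F i j (m + 3 - j) (m + 1 - j) _ (by omega) (by omega) hi1

theorem xi_is_coadjoint_invariant
    (F : Type*) [Field F] [CharZero F] (n : ℕ) (hn : 4 ≤ n)
    (k : ℕ) (hk : k ≤ n - 3) :
    (∑ j ∈ Finset.Icc 2 (n - 1),
        MvPolynomial.X (j - 1) * MvPolynomial.pderiv j (xi F k) = 0) ∧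
    MvPolynomial.pderiv n (xi F k) = 0 := by
  match k with
  | 0 =>
    constructor
    · refine Finset.sum_eq_zero fun j hj => ?_
      have h2 : 2 ≤ j := (Finset.mem_Icc.mp hj).1
      rw [show xi F 0 = X 1 from rfl, pderiv_X_of_ne (by omega), mul_zero]
    · rw [show xi F 0 = X 1 from rfl, pderiv_X_of_ne (by omega)]
  | m + 1 =>
    have hm3 : m + 3 ≤ n - 1 := by omega
    have hfac : ∀ j : ℕ, ((j.factorial : ℕ) : F) ≠ 0 :=
      fun j => Nat.cast_ne_zero.mpr j.factorial_ne_zero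
    have ha : ∀ j : ℕ, ((-1 : F) ^ (j + 1) / (((j + 1).factorial : ℕ) : F)) *
        (((j + 1 : ℕ)) : F) = -((-1 : F) ^ j / ((j.factorial : ℕ) : F)) := by
      intro j
      have h2 : ((j : F) + 1) ≠ 0 := by
        have := Nat.cast_ne_zero (R := F).mpr (Nat.succ_ne_zero j)
        push_cast at this; exact this
      rw [Nat.factorial_succ]
      push_cast
      rw [div_mul_eq_mul_div, mul_comm ((-1 : F) ^ (j + 1)) _, mul_div_mul_left _ _ h2]
      ring
    constructor
    · have mem2 : 2 ∈ Finset.Icc 2 (n - 1) := Finset.mem_Icc.mpr ⟨le_refl 2, by omega⟩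
      have hc : (-1 : F) ^ (m + 1) * ((m + 1 : ℕ) : F) / (((m + 2).factorial : ℕ) : F) *
          (((m + 2 : ℕ)) : F) = -((-1 : F) ^ m / ((m.factorial : ℕ) : F)) := by
        rw [show (m + 2).factorial = (m + 2) * ((m + 1) * m.factorial) from by
          rw [Nat.factorial_succ, Nat.factorial_succ]]
        have h1 : ((m : F) + 2) ≠ 0 := by
          have := Nat.cast_ne_zero (R := F).mpr (show m + 2 ≠ 0 by omega)
          push_cast at this; exact this
        have h2 : ((m : F) + 1) ≠ 0 := by
          have := Nat.cast_ne_zero (R := F).mpr (show m + 1 ≠ 0 by omega)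
          push_cast at this; exact this
        have h3 := hfac m
        push_cast
        field_simp
        ring
      have key : ∀ i ∈ Finset.Icc 2 (n - 1), X (i - 1) * pderiv i (xi F (m + 1)) =
          (if i = 2 then (X 1 : MvPolynomial ℕ F) *
              (C ((-1 : F) ^ (m + 1) * ((m + 1 : ℕ) : F) / (((m + 2).factorial : ℕ) : F)) *
                (((m + 2 : ℕ) : MvPolynomial ℕ F) * X 2 ^ (m + 1))) else 0)
          + ∑ j ∈ Finset.range (m + 1),
              ((if i = 2 then X 1 * (C ((-1 : F) ^ j / ((j.factorial : ℕ) : F)) *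
                    ((j : MvPolynomial ℕ F) * X 2 ^ (j - 1)) * X (m + 3 - j) *
                    X 1 ^ (m + 1 - j)) else 0)
               + (if i = m + 3 - j then X (m + 2 - j) *
                    (C ((-1 : F) ^ j / ((j.factorial : ℕ) : F)) * X 2 ^ j *
                      X 1 ^ (m + 1 - j)) else 0)) := by
        intro i hi
        have hi2 : 2 ≤ i := (Finset.mem_Icc.mp hi).1
        rw [pderiv_xi_succ F m i (by omega), mul_add, Finset.mul_sum]
        congr 1
        · rcases eq_or_ne i 2 with h | h
          · subst h; rw [if_pos rfl, if_pos rfl]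
          · rw [if_neg h, if_neg h, mul_zero]
        · refine Finset.sum_congr rfl fun j hj => ?_
          have hj' := Finset.mem_range.mp hj
          rw [mul_add]
          congr 1
          · rcases eq_or_ne i 2 with h | h
            · subst h; rw [if_pos rfl, if_pos rfl]
            · rw [if_neg h, if_neg h, mul_zero]
          · rcases eq_or_ne i (m + 3 - j) with h | h
            · subst h
              rw [if_pos rfl, if_pos rfl, show m + 3 - j - 1 = m + 2 - j from by omega]
            · rw [if_neg h, if_neg h, mul_zero]
      rw [Finset.sum_congr rfl key, Finset.sum_add_distrib,
        Finset.sum_ite_eq' (Finset.Icc 2 (n - 1)) 2, if_pos mem2, Finset.sum_comm]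
      have inner : ∀ y ∈ Finset.range (m + 1),
          (∑ x ∈ Finset.Icc 2 (n - 1),
            ((if x = 2 then X 1 * (C ((-1 : F) ^ (y) / (((y).factorial : ℕ) : F)) * (((y : ℕ) : MvPolynomial ℕ F) * X 2 ^ (y - 1)) * X (m + 3 - y) * X 1 ^ (m + 1 - y)) else 0)
             + (if x = m + 3 - y then X (m + 2 - y) * (C ((-1 : F) ^ (y) / (((y).factorial : ℕ) : F)) * X 2 ^ (y) * X 1 ^ (m + 1 - y)) else 0)))
          = X 1 * (C ((-1 : F) ^ (y) / (((y).factorial : ℕ) : F)) * (((y : ℕ) : MvPolynomial ℕ F) * X 2 ^ (y - 1)) * X (m + 3 - y) * X 1 ^ (m + 1 - y)) + X (m + 2 - y) * (C ((-1 : F) ^ (y) / (((y).factorial : ℕ) : F)) * X 2 ^ (y) * X 1 ^ (m + 1 - y)) := by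
        intro y hy
        have hy' := Finset.mem_range.mp hy
        rw [Finset.sum_add_distrib, Finset.sum_ite_eq' (Finset.Icc 2 (n - 1)) 2,
          Finset.sum_ite_eq' (Finset.Icc 2 (n - 1)) (m + 3 - y), if_pos mem2,
          if_pos (Finset.mem_Icc.mpr ⟨by omega, by omega⟩)]
      rw [Finset.sum_congr rfl inner, Finset.sum_add_distrib,
        Finset.sum_range_succ', Finset.sum_range_succ]
      have hsum : (∑ j ∈ Finset.range m, X 1 * (C ((-1 : F) ^ (j + 1) / (((j + 1).factorial : ℕ) : F)) * (((j + 1 : ℕ) : MvPolynomial ℕ F) * X 2 ^ (j + 1 - 1)) * X (m + 3 - (j + 1)) * X 1 ^ (m + 1 - (j + 1))))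
          = -∑ j ∈ Finset.range m, X (m + 2 - j) * (C ((-1 : F) ^ (j) / (((j).factorial : ℕ) : F)) * X 2 ^ (j) * X 1 ^ (m + 1 - j)) := by
        rw [← Finset.sum_neg_distrib]
        refine Finset.sum_congr rfl fun j hj => ?_
        have hj' := Finset.mem_range.mp hj
        rw [show j + 1 - 1 = j from rfl, show m + 3 - (j + 1) = m + 2 - j from by omega,
          show m + 1 - (j + 1) = m - j from by omega, show m + 1 - j = m - j + 1 from by omega,
          show ((j + 1 : ℕ) : MvPolynomial ℕ F) = C (((j + 1 : ℕ)) : F) from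
            (map_natCast (C : F →+* MvPolynomial ℕ F) _).symm]
        have hC : (C ((-1 : F) ^ (j + 1) / (((j + 1).factorial : ℕ) : F)) : MvPolynomial ℕ F) *
            C (((j + 1 : ℕ)) : F) = - C ((-1 : F) ^ j / ((j.factorial : ℕ) : F)) := by
          rw [← C_mul, ha j, map_neg]
        linear_combination (X 2 ^ j * X (m + 2 - j) * X 1 ^ (m - j) * X 1) * hC
      have hP0 : X 1 * (C ((-1 : F) ^ (0) / (((0).factorial : ℕ) : F)) * (((0 : ℕ) : MvPolynomial ℕ F) * X 2 ^ (0 - 1)) * X (m + 3 - 0) * X 1 ^ (m + 1 - 0)) = 0 := by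
        simp
      have hQm : X (m + 2 - m) * (C ((-1 : F) ^ (m) / (((m).factorial : ℕ) : F)) * X 2 ^ (m) * X 1 ^ (m + 1 - m)) = X 2 * (C ((-1 : F) ^ m / ((m.factorial : ℕ) : F)) * X 2 ^ m * X 1 ^ 1) := by
        rw [show m + 2 - m = 2 from by omega, show m + 1 - m = 1 from by omega]
      have hCc : (C ((-1 : F) ^ (m + 1) * ((m + 1 : ℕ) : F) / (((m + 2).factorial : ℕ) : F)) :
          MvPolynomial ℕ F) * C (((m + 2 : ℕ)) : F)
          = - C ((-1 : F) ^ m / ((m.factorial : ℕ) : F)) := by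
        rw [← C_mul, hc, map_neg]
      rw [show ((m + 2 : ℕ) : MvPolynomial ℕ F) = C (((m + 2 : ℕ)) : F) from
        (map_natCast (C : F →+* MvPolynomial ℕ F) _).symm]
      linear_combination hsum + hP0 + hQm + (X 1 * X 2 ^ (m + 1)) * hCc
    · rw [pderiv_xi_succ F m n (by omega), if_neg (show ¬ n = 2 by omega), zero_add]
      refine Finset.sum_eq_zero fun j hj => ?_
      have hj' := Finset.mem_range.mp hj
      rw [if_neg (show ¬ n = 2 by omega), if_neg (show ¬ n = m + 3 - j by omega), zero_add]
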